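/- Let ε be the positive root of ε² = ε + 1 (the golden ratio) and let a be a real square root of ε^{-1}. Then the point (x, y, z, t, w) = (a, ε^{-1}, ε^{-1}, −ε^{-2}, ε) ∈ ℝ⁵ is a common zero of all twelve polynomials t² − z³ − w·t³; z² − z²·y − w·t²·z; z·y − w·z³; y·x − w·y²·x; z·x − w·z²·x; y² − y·x²; x² − y³ − w·z³; x − w·x³; −z·y² − w·t·z²; t·z − w·t·z²; z² − z·x²; z² − w·z²·y, and at this point the polynomial 3z² − 2zt evaluates to 3ε^{-2} + 2ε^{-3} ≠ 0. -/

import Mathlib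

/-!
Write `u = ε⁻¹`, so the point is `(√u, u, u, -u², 1/u)`. Since `w u = 1` and `x² = u`, nine of
the twelve relations cancel identically, and the remaining three are multiples of
`u² + u - 1`, which vanishes because `ε² = ε + 1` divided by `ε²` reads `1 = u + u²`.
At the point `3z² − 2zt = 3u² + 2u³`, which is positive.
-/

open Real

def TuraevViroRelations₂₁ {K : Type*} [CommRing K] (x y z t w : K) : Prop :=
  t^2 - z^3 - w*t^3 = 0 ∧
  z^2 - z^2*y - w*t^2*z = 0 ∧
  z*y - w*z^3 = 0 ∧
  y*x - w*y^2*x = 0 ∧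
  z*x - w*z^2*x = 0 ∧
  y^2 - y*x^2 = 0 ∧
  x^2 - y^3 - w*z^3 = 0 ∧
  x - w*x^3 = 0 ∧
  -(z*y^2) - w*t*z^2 = 0 ∧
  t*z - w*t*z^2 = 0 ∧
  z^2 - z*x^2 = 0 ∧
  z^2 - w*z^2*y = 0

theorem turaevViroRelations₂₁_of_mul_eq_one {K : Type*} [CommRing K] {u w x : K}
    (hwu : w * u = 1) (hu : u^2 + u = 1) (hx : x^2 = u) :
    TuraevViroRelations₂₁ x u u (-u^2) w := by
  unfold TuraevViroRelations₂₁
  subst hx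
  refine ⟨?_, ?_, ?_, ?_, ?_, ?_, ?_, ?_, ?_, ?_, ?_, ?_⟩ <;> grind

theorem inv_sq_add_inv_of_sq_eq_add_one {K : Type*} [Field K] {ε : K} (hε : ε^2 = ε + 1) :
    ε⁻¹^2 + ε⁻¹ = 1 := by
  have hε0 : ε ≠ 0 := by rintro rfl; norm_num at hε
  field_simp
  linear_combination -hε

/-- The golden-ratio evaluation point is a common zero of the twelve
Turaev--Viro relations of type (2,1), and at it `3z² − 2zt = 3ε⁻² + 2ε⁻³ ≠ 0`. -/
theorem golden_ratio_point_certificate (ε a x y z t w : ℝ)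
    (hε : ε = (1 + Real.sqrt 5) / 2) (ha : a = Real.sqrt ε⁻¹)
    (hx : x = a) (hy : y = ε⁻¹) (hz : z = ε⁻¹)
    (ht : t = -((ε^2)⁻¹)) (hw : w = ε) :
    (t^2 - z^3 - w*t^3 = 0 ∧
     z^2 - z^2*y - w*t^2*z = 0 ∧
     z*y - w*z^3 = 0 ∧
     y*x - w*y^2*x = 0 ∧
     z*x - w*z^2*x = 0 ∧
     y^2 - y*x^2 = 0 ∧
     x^2 - y^3 - w*z^3 = 0 ∧
     x - w*x^3 = 0 ∧
     -(z*y^2) - w*t*z^2 = 0 ∧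
     t*z - w*t*z^2 = 0 ∧
     z^2 - z*x^2 = 0 ∧
     z^2 - w*z^2*y = 0) ∧
    3*z^2 - 2*z*t = 3*(ε^2)⁻¹ + 2*(ε^3)⁻¹ ∧
    3*(ε^2)⁻¹ + 2*(ε^3)⁻¹ ≠ 0 := by
  have hε_pos : 0 < ε := hε ▸ goldenRatio_pos
  have hε_sq : ε^2 = ε + 1 := hε ▸ goldenRatio_sq
  have ha_sq : a^2 = ε⁻¹ := ha ▸ sq_sqrt (inv_nonneg.mpr hε_pos.le)
  subst hx hy hz ht hw
  rw [← inv_pow] at *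
  refine ⟨turaevViroRelations₂₁_of_mul_eq_one (mul_inv_cancel₀ hε_pos.ne')
    (inv_sq_add_inv_of_sq_eq_add_one hε_sq) ha_sq, by ring, by positivity⟩
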